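/- Let ω⁻ = B₁ ∩ {x₁ < 0} and ξ ∈ H¹₀(ω⁻) satisfy the variational inequality ∫_{ω⁻} ∇ξ·∇(v−ξ) dx ≥ −∫_{ω⁻} x₁(v−ξ) dx for all v ∈ K = {v ∈ H¹₀(ω⁻) : |v| ≤ c} with c > 0. Then ξ ≥ 0 in ω⁻. -/

import Mathlib

/-!
The test function `ξ⁺` is not admissible (not differentiable), so test instead with
`v = ξ + (ξ⁻)² / (2c)`, a `C¹` substitute that still satisfies `|v| ≤ c`. Since
`∇v = (1 - ξ⁻/c) ∇ξ`, the Dirichlet term `∫ ∇ξ·∇(v - ξ) = -∫ (ξ⁻/c) |∇ξ|²` is nonpositive,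
while `x₁ (v - ξ) = x₁ (ξ⁻)² / (2c) ≤ 0` on `ω⁻`. The inequality then forces
`∫ x₁ (ξ⁻)² = 0`, hence `ξ⁻ = 0` a.e.
-/

open MeasureTheory Set

open Filter Topology Asymptotics in
lemma hasDerivAt_min_zero_sq (t : ℝ) :
    HasDerivAt (fun s : ℝ => min s 0 ^ 2) (2 * min t 0) t := by
  rcases lt_trichotomy t 0 with ht | rfl | ht
  · have hloc : (fun s : ℝ => min s 0 ^ 2) =ᶠ[𝓝 t] fun s => s ^ 2 := by
      filter_upwards [Iio_mem_nhds ht] with s hs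
      rw [min_eq_left hs.le]
    rw [min_eq_left ht.le]
    simpa using (hasDerivAt_pow 2 t).congr_of_eventuallyEq hloc
  · have hquad : (fun s : ℝ => min s 0 ^ 2) =O[𝓝 0] fun s => s ^ 2 :=
      IsBigO.of_bound 1 <| Eventually.of_forall fun s => by
        simp only [norm_pow, Real.norm_eq_abs, one_mul]
        exact pow_le_pow_left₀ (abs_nonneg _) (abs_min_le_max_abs_abs.trans (by simp)) 2
    simpa [hasDerivAt_iff_isLittleO_nhds_zero] using
      hquad.trans_isLittleO (isLittleO_pow_id one_lt_two)
  · have hloc : (fun s : ℝ => min s 0 ^ 2) =ᶠ[𝓝 t] fun _ => 0 := by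
      filter_upwards [Ioi_mem_nhds ht] with s hs
      simp [min_eq_right (mem_Ioi.mp hs).le]
    rw [min_eq_right ht.le, mul_zero]
    exact (hasDerivAt_const t 0).congr_of_eventuallyEq hloc

noncomputable def negSqLift (c t : ℝ) : ℝ := t + min t 0 ^ 2 / (2 * c)

lemma hasDerivAt_negSqLift (c t : ℝ) : HasDerivAt (negSqLift c) (1 + min t 0 / c) t := by
  have h := (hasDerivAt_id t).add ((hasDerivAt_min_zero_sq t).div_const (2 * c))
  rwa [mul_div_mul_left _ _ two_ne_zero] at h

lemma continuous_negSqLift (c : ℝ) : Continuous (negSqLift c) :=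
  continuous_iff_continuousAt.2 fun t => (hasDerivAt_negSqLift c t).continuousAt

lemma abs_negSqLift_le {c t : ℝ} (hc : 0 < c) (ht : |t| ≤ c) : |negSqLift c t| ≤ c := by
  rcases le_or_gt 0 t with h | h
  · simpa [negSqLift, min_eq_right h] using ht
  · rw [abs_le] at ht ⊢
    have hsq_nonneg : 0 ≤ t ^ 2 / (2 * c) := by positivity
    have hsq_le : t ^ 2 / (2 * c) ≤ -t / 2 := by
      rw [div_le_div_iff₀ (by positivity) two_pos]
      nlinarith
    simp only [negSqLift, min_eq_left h.le]
    constructor <;> linarith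

section

variable {E : Type*} [NormedAddCommGroup E] [NormedSpace ℝ E]

def boundedTestFunctions (Ω : Set E) (c : ℝ) : Set (E → ℝ) :=
  {v | DifferentiableOn ℝ v Ω ∧ Continuous v ∧ (∀ x ∉ Ω, v x = 0) ∧ ∀ x, |v x| ≤ c}

lemma negSqLift_comp_mem_boundedTestFunctions {Ω : Set E} {c : ℝ} {ξ : E → ℝ}
    (hΩ : IsOpen Ω) (hc : 0 < c) (hξ : ξ ∈ boundedTestFunctions Ω c) :
    negSqLift c ∘ ξ ∈ boundedTestFunctions Ω c := by
  obtain ⟨hdiff, hcont, hzero, hbound⟩ := hξ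
  refine ⟨fun x hx => ?_, (continuous_negSqLift c).comp hcont, fun x hx => ?_,
    fun x => abs_negSqLift_le hc (hbound x)⟩
  · exact ((hasDerivAt_negSqLift c (ξ x)).differentiableAt.comp x
      (hdiff.differentiableAt (hΩ.mem_nhds hx))).differentiableWithinAt
  · simp [negSqLift, hzero x hx]

lemma fderiv_negSqLift_comp {c : ℝ} {ξ : E → ℝ} {x : E} (hξ : DifferentiableAt ℝ ξ x) :
    fderiv ℝ (negSqLift c ∘ ξ) x = (1 + min (ξ x) 0 / c) • fderiv ℝ ξ x :=
  ((hasDerivAt_negSqLift c (ξ x)).comp_hasFDerivAt x hξ.hasFDerivAt).fderiv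

lemma fderiv_mul_fderiv_negSqLift_comp_sub_nonpos {c : ℝ} {ξ : E → ℝ} {x : E}
    (hc : 0 ≤ c) (hξ : DifferentiableAt ℝ ξ x) (u : E) :
    fderiv ℝ ξ x u * (fderiv ℝ (negSqLift c ∘ ξ) x u - fderiv ℝ ξ x u) ≤ 0 := by
  have hs : min (ξ x) 0 / c ≤ 0 := div_nonpos_of_nonpos_of_nonneg (min_le_right _ _) hc
  rw [fderiv_negSqLift_comp hξ, smul_apply, smul_eq_mul]
  nlinarith [sq_nonneg (fderiv ℝ ξ x u)]

end

lemma ae_eq_zero_of_nonpos_of_integral_nonneg {α : Type*} [MeasurableSpace α] {μ : Measure α}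
    {f : α → ℝ} (hf : f ≤ᵐ[μ] 0) (hfi : Integrable f μ) (h : 0 ≤ ∫ x, f x ∂μ) : f =ᵐ[μ] 0 := by
  have hneg : -f =ᵐ[μ] 0 := by
    refine (integral_eq_zero_iff_of_nonneg_ae ?_ hfi.neg).1 ?_
    · filter_upwards [hf] with x hx using neg_nonneg.2 hx
    · rw [Pi.neg_def, integral_neg, neg_eq_zero]
      exact le_antisymm (integral_nonpos_of_ae hf) h
  filter_upwards [hneg] with x hx using neg_eq_zero.1 hx

def leftHalfDisc : Set (ℝ × ℝ) := {x | x.1 ^ 2 + x.2 ^ 2 < 1 ∧ x.1 < 0}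

lemma isOpen_leftHalfDisc : IsOpen leftHalfDisc :=
  (isOpen_lt (f := fun x : ℝ × ℝ => x.1 ^ 2 + x.2 ^ 2) (by fun_prop) continuous_const).inter
    (isOpen_lt continuous_fst continuous_const)

lemma leftHalfDisc_subset_closedBall : leftHalfDisc ⊆ Metric.closedBall 0 1 := by
  intro x hx
  rw [Metric.mem_closedBall, dist_zero_right, Prod.norm_def, Real.norm_eq_abs, Real.norm_eq_abs,
    max_le_iff, abs_le, abs_le]
  refine ⟨⟨?_, ?_⟩, ?_, ?_⟩ <;> nlinarith [hx.1, sq_nonneg x.1, sq_nonneg x.2]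

/-- If `ξ ∈ H¹₀(ω⁻)`, `ω⁻ = B₁ ∩ {x₁ < 0}`, satisfies the variational
inequality `∫_{ω⁻} ∇ξ·∇(v−ξ) ≥ −∫_{ω⁻} x₁(v−ξ)` for all `v` in the constraint
set `K = {v ∈ H¹₀(ω⁻) : |v| ≤ c}` (with `c > 0`), then `ξ ≥ 0` a.e. in `ω⁻`. -/
theorem variational_inequality_nonneg
    (c : ℝ) (hc : 0 < c)
    (ωm : Set (ℝ × ℝ)) (hωm : ωm = {x : ℝ × ℝ | x.1 ^ 2 + x.2 ^ 2 < 1 ∧ x.1 < 0})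
    (K : Set (ℝ × ℝ → ℝ))
    (hK : K = {v | DifferentiableOn ℝ v ωm ∧ Continuous v ∧
      (∀ x ∉ ωm, v x = 0) ∧ ∀ x, |v x| ≤ c})
    (ξ : ℝ × ℝ → ℝ) (hmem : ξ ∈ K)
    (hVI : ∀ v ∈ K,
      (∫ x in ωm, (fderiv ℝ ξ x (1, 0) * (fderiv ℝ v x (1, 0) - fderiv ℝ ξ x (1, 0))
          + fderiv ℝ ξ x (0, 1) * (fderiv ℝ v x (0, 1) - fderiv ℝ ξ x (0, 1))))
        ≥ -∫ x in ωm, x.1 * (v x - ξ x)) :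
    ∀ᵐ x ∂(volume.restrict ωm), 0 ≤ ξ x := by
  change ωm = leftHalfDisc at hωm
  change K = boundedTestFunctions ωm c at hK
  subst hωm hK
  set v := negSqLift c ∘ ξ
  have hmeas := isOpen_leftHalfDisc.measurableSet
  have hsub : ∀ x, v x - ξ x = min (ξ x) 0 ^ 2 / (2 * c) := fun x => add_sub_cancel_left _ _
  have hgrad : ∫ x in leftHalfDisc,
      (fderiv ℝ ξ x (1, 0) * (fderiv ℝ v x (1, 0) - fderiv ℝ ξ x (1, 0))
        + fderiv ℝ ξ x (0, 1) * (fderiv ℝ v x (0, 1) - fderiv ℝ ξ x (0, 1))) ≤ 0 := by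
    refine setIntegral_nonpos hmeas fun x hx => ?_
    have hξx := hmem.1.differentiableAt (isOpen_leftHalfDisc.mem_nhds hx)
    exact add_nonpos (fderiv_mul_fderiv_negSqLift_comp_sub_nonpos hc.le hξx _)
      (fderiv_mul_fderiv_negSqLift_comp_sub_nonpos hc.le hξx _)
  have hint : IntegrableOn (fun x : ℝ × ℝ => x.1 * (v x - ξ x)) leftHalfDisc :=
    (((continuous_fst.mul (((continuous_negSqLift c).comp hmem.2.1).sub hmem.2.1)).continuousOn
      ).integrableOn_compact (isCompact_closedBall 0 1)).mono_set leftHalfDisc_subset_closedBall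
  have hzero : (fun x : ℝ × ℝ => x.1 * (v x - ξ x)) =ᵐ[volume.restrict leftHalfDisc] 0 := by
    refine ae_eq_zero_of_nonpos_of_integral_nonneg ?_ hint
      (by linarith [hVI v (negSqLift_comp_mem_boundedTestFunctions isOpen_leftHalfDisc hc hmem)])
    filter_upwards [ae_restrict_mem hmeas] with x hx
    rw [hsub]
    exact mul_nonpos_of_nonpos_of_nonneg hx.2.le (by positivity)
  filter_upwards [hzero, ae_restrict_mem hmeas] with x hx hxω
  rw [hsub, Pi.zero_apply, mul_eq_zero, div_eq_zero_iff] at hx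
  rcases hx with hx | hx | hx
  · exact absurd hx hxω.2.ne
  · exact min_eq_right_iff.1 (pow_eq_zero_iff two_ne_zero |>.1 hx)
  · linarith
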